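/- Let I ⊆ ℝ be an open interval, p, S, L : I → Matₙ(ℝ) with S differentiable, L twice differentiable, S(u) symmetric for all u, S'(u) + S(u)² + p(u) = 0 and L'(u) = S(u)·L(u) on I, and L(u) invertible for all u ∈ I. Set g(u) := L(u)ᵀ·L(u). Then for every u ∈ I, (1/2)·g''(u) − (1/4)·g'(u)·g(u)⁻¹·g'(u) = −L(u)ᵀ·p(u)·L(u). -/

import Mathlib

open Matrix Set

attribute [local instance] Matrix.frobeniusNormedAddCommGroup Matrix.frobeniusNormedSpace

attribute [local instance] Matrix.frobeniusNormedRing Matrix.frobeniusNormedAlgebra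

/-! With `L' = S L` and `S` symmetric, `g' = 2 Lᵀ S L`; differentiating once more and using the
Sachs equation gives `g'' = 2 Lᵀ (S² - p) L`. On the other hand the factors `L L⁻¹` cancel in
`g' g⁻¹ g' = 4 Lᵀ S L (L⁻¹ L⁻ᵀ) Lᵀ S L = 4 Lᵀ S² L`, so the `S²` terms cancel. -/

section Calculus

variable {𝕜 m : Type*} [RCLike 𝕜] [Fintype m] {u : 𝕜}

theorem HasDerivAt.matrix_transpose {f : 𝕜 → Matrix m m 𝕜} {f' : Matrix m m 𝕜}
    (hf : HasDerivAt f f' u) : HasDerivAt (fun w => (f w)ᵀ) f'ᵀ u :=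
  (transposeLinearEquiv m m 𝕜 𝕜).toLinearMap.toContinuousLinearMap.hasFDerivAt.comp_hasDerivAt
    u hf

variable [DecidableEq m] {L S p : 𝕜 → Matrix m m 𝕜}

theorem hasDerivAt_transpose_mul_self_of_symm (hS : (S u)ᵀ = S u)
    (hL : HasDerivAt L (S u * L u) u) :
    HasDerivAt (fun w => (L w)ᵀ * L w) ((2 : 𝕜) • ((L u)ᵀ * S u * L u)) u := by
  refine (hL.matrix_transpose.mul hL).congr_deriv ?_
  simp only [transpose_mul, hS, two_smul, Matrix.mul_assoc]

theorem hasDerivAt_transpose_mul_mul_of_sachs (hS : (S u)ᵀ = S u)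
    (hSachs : HasDerivAt S (-(S u * S u + p u)) u) (hL : HasDerivAt L (S u * L u) u) :
    HasDerivAt (fun w => (L w)ᵀ * S w * L w) ((L u)ᵀ * (S u * S u - p u) * L u) u := by
  refine ((hL.matrix_transpose.mul hSachs).mul hL).congr_deriv ?_
  simp only [Pi.mul_apply, transpose_mul, hS, Matrix.mul_add, Matrix.add_mul, Matrix.mul_sub,
    Matrix.sub_mul, Matrix.mul_neg, Matrix.neg_mul, Matrix.mul_assoc]
  abel

end Calculus

theorem Matrix.transpose_mul_mul_mul_inv_transpose_mul_self_mul {m R : Type*} [Fintype m]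
    [DecidableEq m] [CommRing R] {L : Matrix m m R} (hL : IsUnit L.det) (A B : Matrix m m R) :
    Lᵀ * A * L * (Lᵀ * L)⁻¹ * (Lᵀ * B * L) = Lᵀ * (A * B) * L := by
  have hLT : IsUnit Lᵀ.det := by rwa [det_transpose]
  calc Lᵀ * A * L * (Lᵀ * L)⁻¹ * (Lᵀ * B * L)
      = Lᵀ * A * (L * L⁻¹) * (Lᵀ⁻¹ * Lᵀ) * B * L := by
        simp only [Matrix.mul_inv_rev, Matrix.mul_assoc]
    _ = Lᵀ * (A * B) * L := by
        rw [mul_nonsing_inv L hL, nonsing_inv_mul Lᵀ hLT]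
        simp only [Matrix.mul_one, Matrix.mul_assoc]

theorem rosen_tidal_curvature {n : ℕ} (a b : ℝ)
    (p S L : ℝ → Matrix (Fin n) (Fin n) ℝ)
    (hSsym : ∀ u ∈ Set.Ioo a b, (S u)ᵀ = S u)
    (hSachs : ∀ u ∈ Set.Ioo a b, HasDerivAt S (-(S u * S u + p u)) u)
    (hL : ∀ u ∈ Set.Ioo a b, HasDerivAt L (S u * L u) u)
    (hLinv : ∀ u ∈ Set.Ioo a b, IsUnit (L u)) :
    ∀ u ∈ Set.Ioo a b,
      (1/2 : ℝ) • deriv (deriv (fun w => (L w)ᵀ * L w)) u -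
      (1/4 : ℝ) • (deriv (fun w => (L w)ᵀ * L w) u * ((L u)ᵀ * L u)⁻¹ *
        deriv (fun w => (L w)ᵀ * L w) u)
      = -((L u)ᵀ * p u * L u) := by
  intro u hu
  have hg' : ∀ v ∈ Ioo a b, deriv (fun w => (L w)ᵀ * L w) v = (2 : ℝ) • ((L v)ᵀ * S v * L v) :=
    fun v hv => (hasDerivAt_transpose_mul_self_of_symm (hSsym v hv) (hL v hv)).deriv
  have hg'' : deriv (deriv (fun w => (L w)ᵀ * L w)) u
      = (2 : ℝ) • ((L u)ᵀ * (S u * S u - p u) * L u) :=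
    (Filter.eventuallyEq_of_mem (isOpen_Ioo.mem_nhds hu) hg').deriv_eq.trans
      ((hasDerivAt_transpose_mul_mul_of_sachs (hSsym u hu) (hSachs u hu) (hL u hu)).const_smul
        (2 : ℝ)).deriv
  have hdet : IsUnit (L u).det := (isUnit_iff_isUnit_det _).mp (hLinv u hu)
  rw [hg'', hg' u hu]
  simp only [smul_mul_assoc, mul_smul_comm, smul_smul]
  rw [transpose_mul_mul_mul_inv_transpose_mul_self_mul hdet, Matrix.mul_sub, Matrix.sub_mul]
  module
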